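/- arXiv:1105.5633 — 2 statements merged into one kernel-verified Lean document; each statement's English description precedes it below -/
import Mathlib

section
/- Rigid divisibility: Let (G_r)_{r≥0} be a decreasing filtration of an abelian group G by subgroups with G_0 = G, such that each quotient G_r/G_{r+1} for r ≥ 1 is torsion-free. For P ∈ G define ord(P) = sup{r : P ∈ G_r}. Suppose P ∈ G with m = min{n ≥ 1 : ord(nP) ≥ 1} finite, and set d = ord(mP) < ∞. Then for all n ≥ 1: ord(nP) = d if m divides n, and ord(nP) = 0 if m does not divide n. -/
noncomputable section

/-- The order of vanishing of `x` with respect to a decreasing filtration `Gf` of an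
abelian group: `ord(x) = sup {r : x ∈ Gf r} ∈ ℕ∞`. -/
def filtOrd {G : Type*} [AddCommGroup G] (Gf : ℕ → AddSubgroup G) (x : G) : ℕ∞ :=
  sSup ((↑) '' {r : ℕ | x ∈ Gf r})

lemma filtOrd_eq_of {G : Type*} [AddCommGroup G] {Gf : ℕ → AddSubgroup G}
    (hdec : Antitone Gf) {x : G} {k : ℕ} (h1 : x ∈ Gf k) (h2 : x ∉ Gf (k + 1)) :
    filtOrd Gf x = (k : ℕ∞) := by
  apply le_antisymm
  · apply sSup_le
    rintro _ ⟨r, hr, rfl⟩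
    by_contra hlt
    push_neg at hlt
    have hk : k + 1 ≤ r := by exact_mod_cast hlt
    exact h2 (hdec hk hr)
  · exact le_sSup ⟨k, h1, rfl⟩

lemma mem_of_filtOrd_eq {G : Type*} [AddCommGroup G] {Gf : ℕ → AddSubgroup G}
    (hdec : Antitone Gf) (h0 : Gf 0 = ⊤) {x : G} {d : ℕ}
    (hd : filtOrd Gf x = (d : ℕ∞)) : x ∈ Gf d := by
  rcases Nat.eq_zero_or_pos d with h | h
  · subst h; simp [h0]
  · by_contra hx
    have hub : filtOrd Gf x ≤ ((d - 1 : ℕ) : ℕ∞) := by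
      apply sSup_le
      rintro _ ⟨r, hr, rfl⟩
      have : r ≤ d - 1 := by
        by_contra hc
        push_neg at hc
        have : d ≤ r := by omega
        exact hx (hdec this hr)
      exact_mod_cast this
    rw [hd] at hub
    have : d ≤ d - 1 := by exact_mod_cast hub
    omega

lemma not_mem_of_filtOrd_eq {G : Type*} [AddCommGroup G] {Gf : ℕ → AddSubgroup G}
    {x : G} {d : ℕ} (hd : filtOrd Gf x = (d : ℕ∞)) : x ∉ Gf (d + 1) := by
  intro hx
  have : ((d + 1 : ℕ) : ℕ∞) ≤ filtOrd Gf x := le_sSup ⟨d + 1, hx, rfl⟩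
  rw [hd] at this
  have : d + 1 ≤ d := by exact_mod_cast this
  omega

/-- **Rigid divisibility.**
Let `G = G_0 ⊇ G_1 ⊇ G_2 ⊇ ⋯` be a decreasing filtration of an abelian group by
subgroups such that each quotient `G_r/G_{r+1}` (`r ≥ 1`) is torsion-free. Let
`P ∈ G`, let `m ≥ 1` be minimal with `ord(m P) ≥ 1`, and suppose `d = ord(m P)` is
finite. Then `ord(n P) = d` whenever `m ∣ n`, and `ord(n P) = 0` whenever `m ∤ n`. -/
theorem rigid_divisibility {G : Type*} [AddCommGroup G]
    (Gf : ℕ → AddSubgroup G) (hdec : Antitone Gf) (h0 : Gf 0 = ⊤)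
    (htf : ∀ r : ℕ, 1 ≤ r → ∀ x ∈ Gf r, ∀ n : ℕ, 0 < n →
      n • x ∈ Gf (r + 1) → x ∈ Gf (r + 1))
    (P : G) (m : ℕ) (hm1 : 1 ≤ m) (hmP : m • P ∈ Gf 1)
    (hmin : ∀ n : ℕ, 1 ≤ n → n • P ∈ Gf 1 → m ≤ n)
    (d : ℕ) (hd : filtOrd Gf (m • P) = (d : ℕ∞)) :
    ∀ n : ℕ, 1 ≤ n →
      (m ∣ n → filtOrd Gf (n • P) = (d : ℕ∞)) ∧
      (¬ m ∣ n → filtOrd Gf (n • P) = 0) := by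
  have hmem : m • P ∈ Gf d := mem_of_filtOrd_eq hdec h0 hd
  have hnot : m • P ∉ Gf (d + 1) := not_mem_of_filtOrd_eq hd
  have hd1 : 1 ≤ d := by
    have : ((1 : ℕ) : ℕ∞) ≤ filtOrd Gf (m • P) := le_sSup ⟨1, hmP, rfl⟩
    rw [hd] at this
    exact_mod_cast this
  intro n hn
  constructor
  · rintro ⟨k, rfl⟩
    have hk : 0 < k := Nat.pos_of_ne_zero (by rintro rfl; simp at hn)
    have h1 : (m * k) • P ∈ Gf d := by
      rw [mul_comm, mul_smul]
      exact (Gf d).nsmul_mem hmem k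
    have h2 : (m * k) • P ∉ Gf (d + 1) := by
      intro hc
      rw [mul_comm, mul_smul] at hc
      exact hnot (htf d hd1 (m • P) hmem k hk hc)
    exact filtOrd_eq_of hdec h1 h2
  · intro hnd
    have h2 : n • P ∉ Gf (0 + 1) := by
      intro hc
      have hr1 : 1 ≤ n % m := by
        rcases Nat.eq_zero_or_pos (n % m) with h | h
        · exact absurd (Nat.dvd_of_mod_eq_zero h) hnd
        · exact h
      have hrP : (n % m) • P ∈ Gf 1 := by
        have : n • P = (m * (n / m)) • P + (n % m) • P := by
          rw [← add_smul, Nat.div_add_mod]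
        have hmk : (m * (n / m)) • P ∈ Gf 1 := by
          rw [mul_comm, mul_smul]
          exact (Gf 1).nsmul_mem hmP _
        have := (Gf 1).sub_mem (this ▸ hc) hmk
        simpa using this
      have := hmin (n % m) hr1 hrP
      have := Nat.mod_lt n (by omega : 0 < m)
      omega
    have h1 : n • P ∈ Gf 0 := by simp [h0]
    exact_mod_cast filtOrd_eq_of hdec h1 h2
end
end

section
/- Abstract primitive divisor argument: Let h > 0 be a real number, C ≥ 0 a constant, and (d_n)_{n≥1} a sequence of nonnegative reals with |d_n - n²h| ≤ C for all n. Suppose for some n one has d_n ≤ ∑_{m|n, m<n} d_m. Then n is bounded by a constant depending only on h and C; explicitly, n²h·(1 - (ζ(2)-1)) ≤ C·(1 + number of divisors of n), which forces n ≤ N(h, C) for some explicit N. -/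
/-!
Write `ζ(2) = π²/6`. For `m ∣ n` the map `m ↦ n / m` is a bijection of the divisors, so
`∑_{m ∣ n, m < n} m² = n² ∑_{k ∣ n, k > 1} 1/k² ≤ n² (ζ(2) - 1)`, and `ζ(2) - 1 < 1`.
So the proper divisors carry strictly less than `n² h` of the main terms `m² h`, while the `τ(n)`
error terms total at most `C τ(n) ≤ C n`; hence `n² h (2 - ζ(2)) ≤ C n`, which bounds `n`.
-/

open Real Finset

lemma sum_one_div_sq_le_of_one_notMem {s : Finset ℕ} (hs : 1 ∉ s) :
    ∑ k ∈ s, 1 / (k : ℝ) ^ 2 ≤ π ^ 2 / 6 - 1 := by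
  have := sum_le_hasSum (insert 1 s) (fun k _ => by positivity) hasSum_zeta_two
  rw [sum_insert hs] at this
  norm_num at this ⊢
  linarith

namespace Nat

lemma sum_divisors_sq_eq (n : ℕ) :
    ∑ m ∈ n.divisors, (m : ℝ) ^ 2 = (n : ℝ) ^ 2 * ∑ k ∈ n.divisors, 1 / (k : ℝ) ^ 2 := by
  rw [← sum_div_divisors, mul_sum]
  refine sum_congr rfl fun k hk => ?_
  have hk0 : (k : ℝ) ≠ 0 := by exact_mod_cast (pos_of_mem_divisors hk).ne'
  rw [Nat.cast_div (dvd_of_mem_divisors hk) hk0]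
  field_simp

lemma sum_properDivisors_sq_le (n : ℕ) :
    ∑ m ∈ n.properDivisors, (m : ℝ) ^ 2 ≤ (n : ℝ) ^ 2 * (π ^ 2 / 6 - 1) := by
  rcases eq_or_ne n 0 with rfl | hn
  · simp
  have hsq : ∑ m ∈ n.divisors, (m : ℝ) ^ 2
      = (n : ℝ) ^ 2 + ∑ m ∈ n.properDivisors, (m : ℝ) ^ 2 := by
    rw [← cons_self_properDivisors hn, sum_cons]
  have hinv : ∑ k ∈ n.divisors, 1 / (k : ℝ) ^ 2
      = 1 + ∑ k ∈ n.divisors.erase 1, 1 / (k : ℝ) ^ 2 := by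
    rw [← add_sum_erase _ _ (one_mem_divisors.2 hn)]
    norm_num
  have htail := sum_one_div_sq_le_of_one_notMem (notMem_erase 1 n.divisors)
  nlinarith [sum_divisors_sq_eq n, sq_nonneg (n : ℝ)]

end Nat

section AbstractHeights

variable {d : ℕ → ℝ} {h C : ℝ}

lemma sum_properDivisors_le_of_abs_sub_le (hh : 0 ≤ h)
    (hd : ∀ m : ℕ, 1 ≤ m → |d m - (m : ℝ) ^ 2 * h| ≤ C) (n : ℕ) :
    ∑ m ∈ n.properDivisors, d m
      ≤ (n : ℝ) ^ 2 * h * (π ^ 2 / 6 - 1) + C * n.properDivisors.card := by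
  calc ∑ m ∈ n.properDivisors, d m ≤ ∑ m ∈ n.properDivisors, ((m : ℝ) ^ 2 * h + C) :=
        sum_le_sum fun m hm => by
          linarith [(abs_le.1 (hd m (Nat.pos_of_mem_properDivisors hm))).2]
    _ = (∑ m ∈ n.properDivisors, (m : ℝ) ^ 2) * h + C * n.properDivisors.card := by
        rw [sum_add_distrib, sum_const, nsmul_eq_mul, sum_mul, mul_comm C]
    _ ≤ (n : ℝ) ^ 2 * h * (π ^ 2 / 6 - 1) + C * n.properDivisors.card := by
        nlinarith [mul_le_mul_of_nonneg_right (Nat.sum_properDivisors_sq_le n) hh]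

lemma sq_mul_le_of_le_sum_properDivisors (hh : 0 ≤ h)
    (hd : ∀ m : ℕ, 1 ≤ m → |d m - (m : ℝ) ^ 2 * h| ≤ C) {n : ℕ} (hn : 1 ≤ n)
    (hle : d n ≤ ∑ m ∈ n.properDivisors, d m) :
    (n : ℝ) ^ 2 * h * (1 - (π ^ 2 / 6 - 1)) ≤ C * n.divisors.card := by
  have hlow : (n : ℝ) ^ 2 * h - C ≤ d n := by linarith [(abs_le.1 (hd n hn)).1]
  have hup := sum_properDivisors_le_of_abs_sub_le hh hd n
  have hcard : (n.properDivisors.card : ℝ) + 1 = n.divisors.card := by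
    rw [← Nat.cons_self_properDivisors (by omega), card_cons, Nat.cast_succ]
  rw [← hcard]
  linarith

end AbstractHeights

/-- **Abstract primitive divisor argument.**
Let `h > 0`, `C ≥ 0`, and let `(d_n)` be a sequence of nonnegative reals with
`|d_n - n² h| ≤ C` for all `n ≥ 1`. Then there is a bound `N = N(h, C)` such that:
whenever `d_n ≤ ∑_{m ∣ n, m < n} d_m` for some `n ≥ 1`, one has the explicit
inequality `n² h (1 - (ζ(2) - 1)) ≤ C (1 + τ(n))` (with `ζ(2) = π²/6` and `τ(n)` the
number of divisors of `n`), and consequently `n ≤ N`. -/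
theorem abstract_primitive_divisor_bound (h C : ℝ) (hh : 0 < h) (hC : 0 ≤ C) :
    ∃ N : ℕ, ∀ d : ℕ → ℝ,
      (∀ n : ℕ, 1 ≤ n → 0 ≤ d n ∧ |d n - (n : ℝ) ^ 2 * h| ≤ C) →
      ∀ n : ℕ, 1 ≤ n → d n ≤ (∑ m ∈ n.properDivisors, d m) →
        (n : ℝ) ^ 2 * h * (1 - (π ^ 2 / 6 - 1)) ≤ C * (1 + (n.divisors.card : ℝ)) ∧
        n ≤ N := by
  have hc : 0 < 1 - (π ^ 2 / 6 - 1) := by nlinarith [pi_lt_d2, pi_pos]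
  refine ⟨⌈C / (h * (1 - (π ^ 2 / 6 - 1)))⌉₊, fun d hd n hn hle => ?_⟩
  have key := sq_mul_le_of_le_sum_properDivisors hh.le (fun m hm => (hd m hm).2) hn hle
  refine ⟨key.trans (by linarith), Nat.cast_le.1 (le_trans ?_ (Nat.le_ceil _))⟩
  have hτ : (n.divisors.card : ℝ) ≤ n := by exact_mod_cast Nat.card_divisors_le_self n
  have hn1 : (1 : ℝ) ≤ n := by exact_mod_cast hn
  -- `n² h c ≤ C τ(n) ≤ C n`, then divide by `n`.
  rw [le_div_iff₀ (by positivity)]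
  nlinarith
end
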